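/- (Euclidean kernel expansion with Gibbs weight) Let k : ℝ≥0 → ℝ≥0 be bounded with support in [0,1], U ∈ C^∞(ℝ^m) with bounded derivatives up to order 2 on compacts, and φ ∈ C_c^∞(ℝ^m). Then uniformly for x in any compact set, ∫_{ℝ^m} h^{−m} k(|x−y|/h) e^{−U(y)} dy = C_{k,0} e^{−U(x)} + O(h²), where C_{k,0} = S_{m−1} ∫_0^1 k(r) r^{m−1} dr. -/

import Mathlib

open MeasureTheory Real Metric Set

-- Aux integrability lemma
lemma aux_integrable {m : ℕ} (F : EuclideanSpace ℝ (Fin m) → ℝ)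
    (hF : AEStronglyMeasurable F volume) (R C : ℝ)
    (hbdd : ∀ z, ‖z‖ ≤ R → |F z| ≤ C) (hsup : ∀ z, R < ‖z‖ → F z = 0) :
    Integrable F := by
  have hint : Integrable ((closedBall (0:EuclideanSpace ℝ (Fin m)) R).indicator fun _ => C) :=
    (integrable_indicator_iff measurableSet_closedBall).2
      (integrableOn_const measure_closedBall_lt_top.ne)
  refine hint.mono' hF (Filter.Eventually.of_forall fun z => ?_)
  by_cases hz : ‖z‖ ≤ R
  · rw [Set.indicator_of_mem (by simpa [mem_closedBall, dist_zero_right] using hz)]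
    simpa [Real.norm_eq_abs] using hbdd z hz
  · rw [Set.indicator_of_notMem (by simpa [mem_closedBall, dist_zero_right] using hz)]
    simp [hsup z (not_le.1 hz), le_refl]

lemma aux_knorm_zero {k : NNReal → NNReal} (hsupp : ∀ r : NNReal, 1 < r → k r = 0)
    {y : ℝ} (hy : 1 < y) : k y.toNNReal = 0 := by
  apply hsupp
  rw [← Real.toNNReal_one]
  exact (Real.toNNReal_lt_toNNReal_iff (lt_trans one_pos hy)).2 hy

lemma aux_radial {m : ℕ} (k : NNReal → NNReal) (hk : Measurable k)
    (Cb : NNReal) (hCb : ∀ r, k r ≤ Cb) (hsupp : ∀ r : NNReal, 1 < r → k r = 0) :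
    (∫ y in Ioi (0:ℝ), y ^ (m-1) • (k y.toNNReal : ℝ)) =
      ∫ r in (0:ℝ)..1, (k r.toNNReal : ℝ) * r ^ (m - 1) := by
  have hzero : ∀ y ∈ Ioi (1:ℝ), y ^ (m-1) • (k y.toNNReal : ℝ) = 0 := fun y hy => by
    simp [aux_knorm_zero hsupp hy]
  have hmeas : Measurable (fun y : ℝ => y ^ (m-1) • (k y.toNNReal : ℝ)) :=
    (measurable_id.pow_const _).smul
      (measurable_coe_nnreal_real.comp (hk.comp measurable_real_toNNReal))
  have h2 : IntegrableOn (fun y : ℝ => y ^ (m-1) • (k y.toNNReal : ℝ)) (Ioi 1) :=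
    (integrableOn_zero (ε' := ℝ)).congr_fun (fun y hy => (hzero y hy).symm) measurableSet_Ioi
  have h1 : IntegrableOn (fun y : ℝ => y ^ (m-1) • (k y.toNNReal : ℝ)) (Ioc 0 1) := by
    refine Integrable.mono' (g := fun _ => (Cb:ℝ))
      (integrableOn_const (by simp)) hmeas.aestronglyMeasurable ?_
    refine (ae_restrict_iff' measurableSet_Ioc).2 (Filter.Eventually.of_forall fun y hy => ?_)
    rw [smul_eq_mul, Real.norm_eq_abs, abs_mul, abs_pow, abs_of_nonneg hy.1.le,
      abs_of_nonneg (NNReal.coe_nonneg _)]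
    calc y ^ (m-1) * (k y.toNNReal : ℝ) ≤ 1 * (Cb : ℝ) := by
          apply mul_le_mul (pow_le_one₀ hy.1.le hy.2) (by exact_mod_cast hCb _)
            (NNReal.coe_nonneg _) zero_le_one
      _ = (Cb : ℝ) := one_mul _
  rw [← Set.Ioc_union_Ioi_eq_Ioi (zero_le_one (α := ℝ)),
    setIntegral_union (Set.Ioc_disjoint_Ioi le_rfl) measurableSet_Ioi h1 h2,
    setIntegral_congr_fun measurableSet_Ioi hzero]
  simp only [integral_zero, add_zero]
  rw [intervalIntegral.integral_of_le zero_le_one]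
  exact setIntegral_congr_fun measurableSet_Ioc fun y _ => by rw [smul_eq_mul, mul_comm]

lemma aux_const {m : ℕ} (hm : 1 ≤ m) :
    (m : ℝ) * (volume (ball (0 : EuclideanSpace ℝ (Fin m)) 1)).toReal =
      2 * Real.pi ^ ((m : ℝ) / 2) / Real.Gamma ((m : ℝ) / 2) := by
  haveI : Nonempty (Fin m) := ⟨⟨0, hm⟩⟩
  have hball := EuclideanSpace.volume_ball (Fin m) 0 1
  rw [Fintype.card_fin] at hball
  have hΓpos : 0 < Real.Gamma ((m:ℝ)/2) :=
    Real.Gamma_pos_of_pos (by positivity)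
  have hΓ1pos : 0 < Real.Gamma ((m:ℝ)/2 + 1) :=
    Real.Gamma_pos_of_pos (by positivity)
  have hsq : Real.sqrt Real.pi ^ m = Real.pi ^ ((m:ℝ)/2) := by
    rw [Real.sqrt_eq_rpow, ← Real.rpow_natCast (Real.pi ^ ((1:ℝ)/2)) m,
      ← Real.rpow_mul Real.pi_nonneg]
    ring_nf
  rw [hball]
  rw [ENNReal.ofReal_one, one_pow, one_mul, ENNReal.toReal_ofReal (by positivity)]
  rw [Real.Gamma_add_one (by positivity), hsq]
  have hm0 : (m:ℝ) ≠ 0 := by positivity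
  field_simp

lemma aux_moment {m : ℕ} (hm : 1 ≤ m) (k : NNReal → NNReal) (hk : Measurable k)
    (Cb : NNReal) (hCb : ∀ r, k r ≤ Cb) (hsupp : ∀ r : NNReal, 1 < r → k r = 0) :
    ∫ u : EuclideanSpace ℝ (Fin m), (k ‖u‖.toNNReal : ℝ) =
      (2 * Real.pi ^ ((m : ℝ) / 2) / Real.Gamma ((m : ℝ) / 2))
        * ∫ r in (0:ℝ)..1, (k r.toNNReal : ℝ) * r ^ (m - 1) := by
  haveI : Nonempty (Fin m) := ⟨⟨0, hm⟩⟩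
  haveI : Nontrivial (EuclideanSpace ℝ (Fin m)) := by
    apply Module.nontrivial_of_finrank_pos (R := ℝ)
    rw [finrank_euclideanSpace_fin]; omega
  have hdim : Module.finrank ℝ (EuclideanSpace ℝ (Fin m)) = m := finrank_euclideanSpace_fin
  rw [MeasureTheory.integral_fun_norm_addHaar volume (fun r : ℝ => (k r.toNNReal : ℝ))]
  rw [hdim, aux_radial k hk Cb hCb hsupp, nsmul_eq_mul, smul_eq_mul, ← mul_assoc,
    measureReal_def, aux_const hm]

lemma aux_taylor {m : ℕ} (f : EuclideanSpace ℝ (Fin m) → ℝ) (hf : ContDiff ℝ (⊤ : ℕ∞) f)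
    (K : Set (EuclideanSpace ℝ (Fin m))) (hK : IsCompact K) :
    ∃ M : ℝ, 0 ≤ M ∧ ∀ x ∈ K, ∀ z : EuclideanSpace ℝ (Fin m), ‖z‖ ≤ 1 →
      |f (x + z) - f x - fderiv ℝ f x z| ≤ M * ‖z‖ ^ 2 := by
  set K₂ := cthickening 2 K with hK₂def
  have hK₂ : IsCompact K₂ := hK.cthickening
  have hdf : ContDiff ℝ (⊤ : ℕ∞) (fderiv ℝ f) := hf.fderiv_right (by simp)
  have hddf : ContDiff ℝ (⊤ : ℕ∞) (fderiv ℝ (fderiv ℝ f)) := hdf.fderiv_right (by simp)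
  have hcont : ContinuousOn (fderiv ℝ (fderiv ℝ f)) K₂ :=
    hddf.continuous.continuousOn
  obtain ⟨M₂, hM₂⟩ : ∃ M₂, ∀ z ∈ K₂, ‖fderiv ℝ (fderiv ℝ f) z‖ ≤ M₂ :=
    hK₂.exists_bound_of_continuousOn (f := fderiv ℝ (fderiv ℝ f)) hcont
  refine ⟨max M₂ 0, le_max_right _ _, fun x hx z hz => ?_⟩
  have hsub : closedBall x 1 ⊆ K₂ := fun y hy =>
    Metric.mem_cthickening_of_dist_le y x 2 K hx (le_trans (mem_closedBall.1 hy) one_le_two)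
  -- Lipschitz bound for fderiv f on closedBall x 1
  have hlip : ∀ y ∈ closedBall x 1, ‖fderiv ℝ f y - fderiv ℝ f x‖ ≤ (max M₂ 0) * ‖y - x‖ := by
    intro y hy
    refine (convex_closedBall x 1).norm_image_sub_le_of_norm_fderiv_le
      (fun w _ => (hdf.differentiable (by simp)).differentiableAt)
      (fun w hw => le_trans (hM₂ w (hsub hw)) (le_max_left _ _))
      (mem_closedBall_self zero_le_one) hy
  -- second-order bound
  set L := fderiv ℝ f x with hL
  have hg : ∀ y ∈ closedBall x ‖z‖, HasFDerivWithinAt (fun w => f w - L w)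
      (fderiv ℝ f y - L) (closedBall x ‖z‖) y := fun y _ =>
    (((hf.differentiable (by simp)).differentiableAt.hasFDerivAt).sub (L.hasFDerivAt)).hasFDerivWithinAt
  have hbound : ∀ y ∈ closedBall x ‖z‖, ‖fderiv ℝ f y - L‖ ≤ (max M₂ 0) * ‖z‖ := by
    intro y hy
    calc ‖fderiv ℝ f y - L‖ ≤ (max M₂ 0) * ‖y - x‖ :=
          hlip y (closedBall_subset_closedBall hz hy)
      _ ≤ (max M₂ 0) * ‖z‖ := by
          apply mul_le_mul_of_nonneg_left _ (le_max_right _ _)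
          rwa [← dist_eq_norm, ← mem_closedBall]
  have key := (convex_closedBall x ‖z‖).norm_image_sub_le_of_norm_hasFDerivWithin_le
    hg hbound (mem_closedBall_self (norm_nonneg z))
    (by rw [mem_closedBall, dist_eq_norm, add_sub_cancel_left])
  have : f (x + z) - L (x + z) - (f x - L x) = f (x + z) - f x - L z := by
    rw [map_add]; ring
  rw [this, add_sub_cancel_left] at key
  calc |f (x + z) - f x - L z| ≤ (max M₂ 0) * ‖z‖ * ‖z‖ := key
    _ = (max M₂ 0) * ‖z‖ ^ 2 := by ring

section AuxMain

variable {m : ℕ}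

theorem main_aux (m : ℕ) (hm : 1 ≤ m) (k : NNReal → NNReal)
    (hk : Measurable k) (Cb : NNReal) (hCb : ∀ r, k r ≤ Cb)
    (hsupp : ∀ r : NNReal, 1 < r → k r = 0)
    (U : EuclideanSpace ℝ (Fin m) → ℝ) (hU : ContDiff ℝ (⊤ : ℕ∞) U)
    (Ck0 : ℝ)
    (hCk0 : Ck0 = (2 * Real.pi ^ ((m : ℝ) / 2) / Real.Gamma ((m : ℝ) / 2))
        * ∫ r in (0:ℝ)..1, (k r.toNNReal : ℝ) * r ^ (m - 1))
    (K : Set (EuclideanSpace ℝ (Fin m))) (hK : IsCompact K) :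
    ∃ C > (0:ℝ), ∃ h₀ > (0:ℝ), ∀ h : ℝ, 0 < h → h ≤ h₀ →
      ∀ x ∈ K,
        |(∫ y, (1 / h ^ m) * (k (Real.toNNReal (dist x y / h)) : ℝ) * Real.exp (-U y))
          - Ck0 * Real.exp (-U x)| ≤ C * h ^ 2 := by
  classical
  set f : EuclideanSpace ℝ (Fin m) → ℝ := fun y => Real.exp (-U y) with hfdef
  have hf : ContDiff ℝ (⊤ : ℕ∞) f := hU.neg.exp
  obtain ⟨M, hM0, hM⟩ := aux_taylor f hf K hK
  set V : ℝ := (volume (ball (0 : EuclideanSpace ℝ (Fin m)) 1)).toReal with hVdef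
  have hV0 : 0 ≤ V := ENNReal.toReal_nonneg
  set A : ℝ := ∫ u : EuclideanSpace ℝ (Fin m), (k ‖u‖.toNNReal : ℝ) with hAdef
  have hA : A = Ck0 := by rw [hAdef, aux_moment hm k hk Cb hCb hsupp, hCk0]
  refine ⟨(Cb : ℝ) * M * V + 1, by positivity, 1, one_pos, fun h hh hh1 x hx => ?_⟩
  have hhm : (0:ℝ) < h ^ m := pow_pos hh m
  -- the kernel profile
  set kh : EuclideanSpace ℝ (Fin m) → ℝ := fun z => (k (‖z‖ / h).toNNReal : ℝ) with hkhdef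
  have khmeas : Measurable kh :=
    measurable_coe_nnreal_real.comp (hk.comp (measurable_real_toNNReal.comp
      (measurable_norm.div_const h)))
  have khzero : ∀ z : EuclideanSpace ℝ (Fin m), h < ‖z‖ → kh z = 0 := by
    intro z hz
    have : (1:ℝ) < ‖z‖ / h := (one_lt_div hh).2 hz
    simp [hkhdef, aux_knorm_zero hsupp this]
  have khbd : ∀ z, |kh z| ≤ (Cb:ℝ) := fun z => by
    rw [abs_of_nonneg (NNReal.coe_nonneg _)]
    exact_mod_cast hCb _
  have khnn : ∀ z, 0 ≤ kh z := fun z => NNReal.coe_nonneg _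
  set L : EuclideanSpace ℝ (Fin m) →L[ℝ] ℝ := fderiv ℝ f x with hLdef
  -- Step 1 : translation
  have htrans : (∫ y, (1 / h ^ m) * (k (Real.toNNReal (dist x y / h)) : ℝ) * Real.exp (-U y))
      = (1 / h ^ m) * ∫ z, kh z * f (x + z) := by
    rw [← MeasureTheory.integral_add_left_eq_self
      (f := fun y => (1 / h ^ m) * (k (Real.toNNReal (dist x y / h)) : ℝ) * Real.exp (-U y)) x,
      ← integral_const_mul]
    congr 1; funext z
    have hd : dist x (x + z) = ‖z‖ := by
      rw [dist_eq_norm]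
      simp
    rw [hd]
    ring
  -- integrability of the three pieces
  have hfc : Continuous f := hf.continuous
  have I1 : Integrable (fun z => kh z * f x) :=
    aux_integrable _ (khmeas.mul_const _).aestronglyMeasurable h ((Cb:ℝ) * |f x|)
      (fun z _ => by rw [abs_mul]; exact mul_le_mul_of_nonneg_right (khbd z) (abs_nonneg _))
      (fun z hz => by rw [khzero z hz, zero_mul])
  have I2 : Integrable (fun z => kh z * L z) :=
    aux_integrable _ (khmeas.aestronglyMeasurable.mul L.continuous.aestronglyMeasurable)
      h ((Cb:ℝ) * (‖L‖ * h))
      (fun z hz => by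
        rw [abs_mul]
        refine mul_le_mul (khbd z) ?_ (abs_nonneg _) (NNReal.coe_nonneg _)
        calc |L z| ≤ ‖L‖ * ‖z‖ := L.le_opNorm z
          _ ≤ ‖L‖ * h := mul_le_mul_of_nonneg_left hz (norm_nonneg _))
      (fun z hz => by rw [khzero z hz, zero_mul])
  have hRmbd : ∀ z : EuclideanSpace ℝ (Fin m), ‖z‖ ≤ h → |f (x + z) - f x - L z| ≤ M * h ^ 2 := by
    intro z hz
    have h1 : ‖z‖ ≤ 1 := hz.trans hh1
    calc |f (x + z) - f x - L z| ≤ M * ‖z‖ ^ 2 := hM x hx z h1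
      _ ≤ M * h ^ 2 := by
          apply mul_le_mul_of_nonneg_left _ hM0
          exact pow_le_pow_left₀ (norm_nonneg z) hz 2
  have I3 : Integrable (fun z => kh z * (f (x + z) - f x - L z)) :=
    aux_integrable _ (khmeas.aestronglyMeasurable.mul
        (((hfc.comp (continuous_const.add continuous_id)).sub continuous_const).sub
          L.continuous).aestronglyMeasurable)
      h ((Cb:ℝ) * (M * h ^ 2))
      (fun z hz => by
        rw [abs_mul]
        exact mul_le_mul (khbd z) (hRmbd z hz) (abs_nonneg _) (NNReal.coe_nonneg _))
      (fun z hz => by rw [khzero z hz, zero_mul])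
  -- decomposition
  have hdecomp : (∫ z, kh z * f (x + z)) =
      (∫ z, kh z * f x) + (∫ z, kh z * L z) + ∫ z, kh z * (f (x + z) - f x - L z) := by
    have hsum : (fun z => kh z * f (x + z)) = fun z =>
        (kh z * f x + kh z * L z) + kh z * (f (x + z) - f x - L z) := funext fun z => by ring
    have I12 : Integrable (fun z => kh z * f x + kh z * L z) volume := I1.add I2
    rw [hsum, integral_add I12 I3, integral_add I1 I2]
  -- zeroth moment
  have hmom : (∫ z, kh z) = h ^ m * A := by
    have hcomp : kh = fun z => (fun u : EuclideanSpace ℝ (Fin m) => (k ‖u‖.toNNReal : ℝ)) (h⁻¹ • z) := by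
      funext z
      simp only [hkhdef, norm_smul, norm_inv, Real.norm_eq_abs, abs_of_pos hh]
      rw [inv_mul_eq_div]
    rw [hcomp, MeasureTheory.Measure.integral_comp_smul volume
      (fun u : EuclideanSpace ℝ (Fin m) => (k ‖u‖.toNNReal : ℝ)) h⁻¹]
    rw [finrank_euclideanSpace_fin, inv_pow, inv_inv, abs_of_pos hhm, smul_eq_mul]
  have h1eq : (∫ z, kh z * f x) = h ^ m * A * f x := by
    rw [integral_mul_const, hmom]
  -- odd term vanishes
  have h2eq : (∫ z, kh z * L z) = 0 := by
    have hneg : (∫ z, kh z * L z) = ∫ z, kh (-z) * L (-z) :=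
      (MeasureTheory.integral_neg_eq_self (fun z => kh z * L z) volume).symm
    have : (∫ z, kh (-z) * L (-z)) = - ∫ z, kh z * L z := by
      rw [← integral_neg]
      congr 1; funext z
      have hk1 : kh (-z) = kh z := by simp only [hkhdef, norm_neg]
      rw [hk1, map_neg]
      ring
    linarith [hneg, this]
  -- remainder bound
  have h3bd : |∫ z, kh z * (f (x + z) - f x - L z)| ≤ (Cb:ℝ) * M * V * h ^ m * h ^ 2 := by
    have hgint : Integrable ((closedBall (0:EuclideanSpace ℝ (Fin m)) h).indicator
        (fun _ => (Cb:ℝ) * (M * h ^ 2))) :=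
      (integrable_indicator_iff measurableSet_closedBall).2
        (integrableOn_const measure_closedBall_lt_top.ne)
    have hpt : ∀ z : EuclideanSpace ℝ (Fin m), ‖kh z * (f (x + z) - f x - L z)‖ ≤
        (closedBall (0:EuclideanSpace ℝ (Fin m)) h).indicator
          (fun _ => (Cb:ℝ) * (M * h ^ 2)) z := by
      intro z
      by_cases hz : ‖z‖ ≤ h
      · rw [Set.indicator_of_mem (by simpa [mem_closedBall, dist_zero_right] using hz)]
        rw [Real.norm_eq_abs, abs_mul]
        exact mul_le_mul (khbd z) (hRmbd z hz) (abs_nonneg _) (NNReal.coe_nonneg _)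
      · rw [Set.indicator_of_notMem (by simpa [mem_closedBall, dist_zero_right] using hz),
          khzero z (not_le.1 hz), zero_mul]
        simp
    have hb := norm_integral_le_of_norm_le hgint (Filter.Eventually.of_forall hpt)
    rw [Real.norm_eq_abs] at hb
    refine hb.trans ?_
    rw [integral_indicator_const _ measurableSet_closedBall, smul_eq_mul]
    rw [measureReal_def, Measure.addHaar_closedBall _ _ hh.le, finrank_euclideanSpace_fin]
    rw [ENNReal.toReal_mul, ENNReal.toReal_ofReal (by positivity)]
    calc h ^ m * V * ((Cb:ℝ) * (M * h ^ 2)) = (Cb:ℝ) * M * V * h ^ m * h ^ 2 := by ring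
      _ ≤ (Cb:ℝ) * M * V * h ^ m * h ^ 2 := le_refl _
  -- conclusion
  rw [htrans, hdecomp, h1eq, h2eq, add_zero, hA]
  have hexp : (1 / h ^ m) * (h ^ m * Ck0 * f x + ∫ z, kh z * (f (x + z) - f x - L z))
      - Ck0 * f x = (1 / h ^ m) * ∫ z, kh z * (f (x + z) - f x - L z) := by
    field_simp
    ring
  rw [← hA, hA] -- no-op to keep things aligned
  calc |(1 / h ^ m) * (h ^ m * Ck0 * f x + ∫ z, kh z * (f (x + z) - f x - L z)) - Ck0 * f x|
      = |(1 / h ^ m) * ∫ z, kh z * (f (x + z) - f x - L z)| := by rw [hexp]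
    _ = (1 / h ^ m) * |∫ z, kh z * (f (x + z) - f x - L z)| := by
        rw [abs_mul, abs_of_pos (by positivity)]
    _ ≤ (1 / h ^ m) * ((Cb:ℝ) * M * V * h ^ m * h ^ 2) := by
        apply mul_le_mul_of_nonneg_left h3bd (by positivity)
    _ = (Cb:ℝ) * M * V * h ^ 2 := by field_simp
    _ ≤ ((Cb:ℝ) * M * V + 1) * h ^ 2 := by nlinarith [sq_nonneg h]



end AuxMain

/-- Euclidean kernel expansion with Gibbs weight:
`∫ h⁻ᵐ k(|x−y|/h) e^{−U(y)} dy = C_{k,0} e^{−U(x)} + O(h²)` uniformly on compact sets,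
with `C_{k,0} = S_{m−1} ∫_0^1 k(r) r^{m−1} dr`. -/
theorem stmt_16 (m : ℕ) (hm : 1 ≤ m) (k : NNReal → NNReal)
    (hk : Measurable k) (hbd : ∃ C, ∀ r, k r ≤ C)
    (hsupp : ∀ r : NNReal, 1 < r → k r = 0)
    (U : EuclideanSpace ℝ (Fin m) → ℝ) (hU : ContDiff ℝ (⊤ : ℕ∞) U)
    (Ck0 : ℝ)
    (hCk0 : Ck0 = (2 * Real.pi ^ ((m : ℝ) / 2) / Real.Gamma ((m : ℝ) / 2))
        * ∫ r in (0:ℝ)..1, (k r.toNNReal : ℝ) * r ^ (m - 1))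
    (K : Set (EuclideanSpace ℝ (Fin m))) (hK : IsCompact K) :
    ∃ C > (0:ℝ), ∃ h₀ > (0:ℝ), ∀ h : ℝ, 0 < h → h ≤ h₀ →
      ∀ x ∈ K,
        |(∫ y, (1 / h ^ m) * (k (Real.toNNReal (dist x y / h)) : ℝ) * Real.exp (-U y))
          - Ck0 * Real.exp (-U x)| ≤ C * h ^ 2 := by
  obtain ⟨Cb, hCb⟩ := hbd
  exact main_aux m hm k hk Cb hCb hsupp U hU Ck0 hCk0 K hK
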